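/- Let R⁽ⁱ⁾, R⁽ʲ⁾, R⁽ᵏ⁾ ∈ SO(3) and define for distinct p, q the 2-vector a_{pq} whose first entry is ⟨r₁⁽ᵖ⁾, r₃⁽ᵖ⁾ × r₃⁽ᑫ⁾⟩ and second entry is ⟨r₂⁽ᵖ⁾, r₃⁽ᵖ⁾ × r₃⁽ᑫ⁾⟩ (note a_{qp} uses r₃⁽ᵖ⁾ × r₃⁽ᑫ⁾ with a sign flip, i.e., a_{qp} = (-⟨r₁⁽ᑫ⁾, r₃⁽ᵖ⁾ × r₃⁽ᑫ⁾⟩, -⟨r₂⁽ᑫ⁾, r₃⁽ᵖ⁾ × r₃⁽ᑫ⁾⟩)ᵀ). Then det(a_{ij} a_{ik}) = -det(a_{ji} a_{jk}) = det(a_{ki} a_{kj}), and all three equal det(r₃⁽ⁱ⁾ r₃⁽ʲ⁾ r₃⁽ᵏ⁾). -/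
import Mathlib


open Matrix

/-- The common-line representative `a_{pq}` of two rotations `P, Q ∈ SO(3)`. -/
def aVec (P Q : Matrix (Fin 3) (Fin 3) ℝ) : Fin 2 → ℝ :=
  ![P 0 ⬝ᵥ crossProduct (P 2) (Q 2), P 1 ⬝ᵥ crossProduct (P 2) (Q 2)]

/-- Determinant of the `2×2` matrix with columns `u, v`. -/
def det2 (u v : Fin 2 → ℝ) : ℝ := u 0 * v 1 - u 1 * v 0

lemma lagrange (a b u v : Fin 3 → ℝ) :
    (a ⬝ᵥ u) * (b ⬝ᵥ v) - (b ⬝ᵥ u) * (a ⬝ᵥ v)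
      = crossProduct a b ⬝ᵥ crossProduct u v := by
  simp [cross_apply, dotProduct, Fin.sum_univ_three]
  ring

lemma rows_orthonormal {P : Matrix (Fin 3) (Fin 3) ℝ}
    (h : P ∈ Matrix.specialOrthogonalGroup (Fin 3) ℝ) (p q : Fin 3) :
    P p ⬝ᵥ P q = (1 : Matrix (Fin 3) (Fin 3) ℝ) p q := by
  rw [Matrix.mem_specialOrthogonalGroup_iff, Matrix.mem_orthogonalGroup_iff] at h
  rw [← h.1]
  simp [Matrix.mul_apply, dotProduct, Matrix.star_apply]

lemma cross_rows {P : Matrix (Fin 3) (Fin 3) ℝ}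
    (h : P ∈ Matrix.specialOrthogonalGroup (Fin 3) ℝ) :
    (crossProduct (P 0) (P 1) : Fin 3 → ℝ) = P 2 := by
  have hdet : P.det = 1 := ((Matrix.mem_specialOrthogonalGroup_iff.mp h)).2
  have h00 := rows_orthonormal h 0 0
  have h01 := rows_orthonormal h 0 1
  have h11 := rows_orthonormal h 1 1
  have h22 := rows_orthonormal h 2 2
  simp [dotProduct, Fin.sum_univ_three, Matrix.one_apply] at h00 h01 h11 h22
  rw [Matrix.det_fin_three] at hdet
  have hsq : (P 0 1 * P 1 2 - P 0 2 * P 1 1 - P 2 0)^2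
      + (P 0 2 * P 1 0 - P 0 0 * P 1 2 - P 2 1)^2
      + (P 0 0 * P 1 1 - P 0 1 * P 1 0 - P 2 2)^2 = 0 := by
    linear_combination (P 1 0^2 + P 1 1^2 + P 1 2^2) * h00 + h11
      - (P 0 0 * P 1 0 + P 0 1 * P 1 1 + P 0 2 * P 1 2) * h01 - 2 * hdet + h22
  have n0 := sq_nonneg (P 0 1 * P 1 2 - P 0 2 * P 1 1 - P 2 0)
  have n1 := sq_nonneg (P 0 2 * P 1 0 - P 0 0 * P 1 2 - P 2 1)
  have n2 := sq_nonneg (P 0 0 * P 1 1 - P 0 1 * P 1 0 - P 2 2)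
  have e0 : P 0 1 * P 1 2 - P 0 2 * P 1 1 - P 2 0 = 0 :=
    pow_eq_zero_iff two_ne_zero |>.mp (by linarith)
  have e1 : P 0 2 * P 1 0 - P 0 0 * P 1 2 - P 2 1 = 0 :=
    pow_eq_zero_iff two_ne_zero |>.mp (by linarith)
  have e2 : P 0 0 * P 1 1 - P 0 1 * P 1 0 - P 2 2 = 0 :=
    pow_eq_zero_iff two_ne_zero |>.mp (by linarith)
  funext i
  fin_cases i <;> simp [cross_apply] <;> linarith

lemma det2_aVec {P : Matrix (Fin 3) (Fin 3) ℝ}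
    (h : P ∈ Matrix.specialOrthogonalGroup (Fin 3) ℝ) (Q R : Matrix (Fin 3) (Fin 3) ℝ) :
    det2 (aVec P Q) (aVec P R) = P 2 ⬝ᵥ crossProduct (Q 2) (R 2) := by
  have hc := cross_rows h
  have hn : P 2 ⬝ᵥ P 2 = 1 := by simpa [Matrix.one_apply] using rows_orthonormal h 2 2
  have key : det2 (aVec P Q) (aVec P R)
      = crossProduct (P 0) (P 1) ⬝ᵥ
        crossProduct (crossProduct (P 2) (Q 2)) (crossProduct (P 2) (R 2)) := by
    rw [det2, aVec, aVec, ← lagrange]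
    simp
  have expand : (crossProduct (crossProduct (P 2) (Q 2)) (crossProduct (P 2) (R 2)) : Fin 3 → ℝ)
      = (P 2 ⬝ᵥ crossProduct (Q 2) (R 2)) • P 2 := by
    funext i
    fin_cases i <;>
    · simp [cross_apply, dotProduct, Fin.sum_univ_three]
      ring
  rw [key, hc, expand, dotProduct_smul, hn, smul_eq_mul, mul_one]

/-- For rotations `R⁽ⁱ⁾, R⁽ʲ⁾, R⁽ᵏ⁾ ∈ SO(3)`:
`det(a_{ij} a_{ik}) = -det(a_{ji} a_{jk}) = det(a_{ki} a_{kj})`, and all equal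
`det(r₃⁽ⁱ⁾ r₃⁽ʲ⁾ r₃⁽ᵏ⁾)`. -/
theorem stmt4 (Ri Rj Rk : Matrix (Fin 3) (Fin 3) ℝ)
    (hi : Ri ∈ Matrix.specialOrthogonalGroup (Fin 3) ℝ)
    (hj : Rj ∈ Matrix.specialOrthogonalGroup (Fin 3) ℝ)
    (hk : Rk ∈ Matrix.specialOrthogonalGroup (Fin 3) ℝ) :
    det2 (aVec Ri Rj) (aVec Ri Rk) = -det2 (aVec Rj Ri) (aVec Rj Rk) ∧
    -det2 (aVec Rj Ri) (aVec Rj Rk) = det2 (aVec Rk Ri) (aVec Rk Rj) ∧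
    det2 (aVec Ri Rj) (aVec Ri Rk) = ((Matrix.of ![Ri 2, Rj 2, Rk 2])ᵀ).det := by
  rw [det2_aVec hi, det2_aVec hj, det2_aVec hk, Matrix.det_transpose, Matrix.det_fin_three]
  refine ⟨?_, ?_, ?_⟩ <;>
  · simp [cross_apply, dotProduct, Fin.sum_univ_three]
    ring
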